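/- arXiv:2504.19599 — 5 statements merged into one kernel-verified Lean document; each statement's English description precedes it below -/
import Mathlib

section
/- Let Y be a finite set, π' a full-support probability distribution on Y, R : Y → ℝ, β > 0, and π* the Gibbs distribution π*(y) = π'(y)exp(R(y)/β)/Z. For any full-support probability distribution π on Y, define the implicit reward R_π(y) = β·log(π(y)/π'(y)). Then for any full-support sampling distribution π_s on Y, the loss L(π) = E_{y∼π_s}[((R_π(y) − E_{π_s}R_π) − (R(y) − E_{π_s}R))²] satisfies L(π) ≥ 0 with equality if and only if π = π*. -/
/-!
Write `g y = π' y * exp (R y / β)` for the unnormalised Gibbs weights, so that `πstar = g / Z`.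
The centred rewards differ by `d = Rπ - R = β * log (π / g)`, and the loss is the `πs`-variance
of `d`. As `πs` has full support, the variance vanishes iff `d` is constant, i.e. iff `π` is a
constant multiple of `g`; normalisation then forces `π = g / Z`.
-/

open Finset

section WeightedVariance

variable {Y : Type*} [Fintype Y] {w f : Y → ℝ}

theorem sum_mul_sq_sub_nonneg (hw : ∀ y, 0 ≤ w y) (m : ℝ) :
    0 ≤ ∑ y, w y * (f y - m) ^ 2 :=
  sum_nonneg fun y _ => mul_nonneg (hw y) (sq_nonneg _)

theorem sum_mul_sq_sub_eq_zero_iff (hw : ∀ y, 0 < w y) (m : ℝ) :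
    ∑ y, w y * (f y - m) ^ 2 = 0 ↔ ∀ y, f y = m := by
  rw [sum_eq_zero_iff_of_nonneg fun y _ => mul_nonneg (hw y).le (sq_nonneg _)]
  simp [(hw _).ne', sub_eq_zero]

theorem forall_eq_sum_mul_iff_exists_const (hw1 : ∑ y, w y = 1) :
    (∀ y, f y = ∑ z, w z * f z) ↔ ∃ c, ∀ y, f y = c := by
  refine ⟨fun h => ⟨_, h⟩, fun ⟨c, hc⟩ y => ?_⟩
  simp only [hc, ← sum_mul, hw1, one_mul]

end WeightedVariance

section LogRatio

open Real

theorem exists_const_mul_log_iff {Y : Type*} {r : Y → ℝ} (hr : ∀ y, 0 < r y) {β : ℝ}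
    (hβ : β ≠ 0) : (∃ c, ∀ y, β * log (r y) = c) ↔ ∃ K, ∀ y, r y = K := by
  constructor
  · rintro ⟨c, hc⟩
    refine ⟨exp (c / β), fun y => ?_⟩
    rw [← hc y, mul_div_cancel_left₀ _ hβ, exp_log (hr y)]
  · rintro ⟨K, hK⟩
    exact ⟨β * log K, fun y => by rw [hK y]⟩

theorem exists_const_mul_log_div_iff {Y : Type*} {p g : Y → ℝ} (hp : ∀ y, 0 < p y)
    (hg : ∀ y, 0 < g y) {β : ℝ} (hβ : β ≠ 0) :
    (∃ c, ∀ y, β * log (p y / g y) = c) ↔ ∃ K, ∀ y, p y = K * g y := by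
  rw [exists_const_mul_log_iff (fun y => div_pos (hp y) (hg y)) hβ]
  simp only [div_eq_iff (hg _).ne']

theorem eq_div_sum_iff_exists_const_mul {Y : Type*} [Fintype Y] {p g : Y → ℝ}
    (hp1 : ∑ y, p y = 1) : (∃ K, ∀ y, p y = K * g y) ↔ p = fun y => g y / ∑ z, g z := by
  constructor
  · rintro ⟨K, hK⟩
    have hKg : K * ∑ z, g z = 1 := by rw [mul_sum, ← hp1]; simp only [hK]
    funext y
    rw [hK y, eq_div_iff (right_ne_zero_of_mul_eq_one hKg), mul_right_comm, hKg, one_mul]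
  · intro hp
    exact ⟨(∑ z, g z)⁻¹, fun y => by rw [hp, ← div_eq_inv_mul]⟩

theorem mul_log_div_sub_eq_mul_log_div_mul_exp {a b R β : ℝ} (ha : 0 < a) (hb : 0 < b)
    (hβ : β ≠ 0) : β * log (a / b) - R = β * log (a / (b * exp (R / β))) := by
  rw [← div_div, log_div (div_pos ha hb).ne' (exp_pos _).ne', log_exp, mul_sub,
    mul_div_cancel₀ _ hβ]

end LogRatio

theorem gvpo_loss_nonneg_and_zero_iff_gibbs_general
    {Y : Type*} [Fintype Y]
    (π' πs π : Y → ℝ)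
    (hπ' : ∀ y, 0 < π' y)
    (hπs : ∀ y, 0 < πs y) (hπs1 : ∑ y, πs y = 1)
    (hπ : ∀ y, 0 < π y) (hπ1 : ∑ y, π y = 1)
    (R : Y → ℝ) (β : ℝ) (hβ : 0 < β)
    (Z : ℝ) (hZ : Z = ∑ y, π' y * Real.exp (R y / β))
    (πstar : Y → ℝ) (hπstar : ∀ y, πstar y = π' y * Real.exp (R y / β) / Z)
    (Rπ : Y → ℝ) (hRπ : ∀ y, Rπ y = β * Real.log (π y / π' y))
    (L : ℝ)
    (hL : L = ∑ y, πs y *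
      ((Rπ y - ∑ z, πs z * Rπ z) - (R y - ∑ z, πs z * R z))^2) :
    0 ≤ L ∧ (L = 0 ↔ π = πstar) := by
  set d : Y → ℝ := fun y => Rπ y - R y
  have hL_var : L = ∑ y, πs y * (d y - ∑ z, πs z * d z) ^ 2 := by
    simp only [hL, d, mul_sub, sum_sub_distrib, sub_sub_sub_comm]
  have hd : ∀ y, d y = β * Real.log (π y / (π' y * Real.exp (R y / β))) := fun y => by
    rw [← mul_log_div_sub_eq_mul_log_div_mul_exp (hπ y) (hπ' y) hβ.ne', ← hRπ y]
  have hπstar_eq :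
      πstar = fun y => π' y * Real.exp (R y / β) / ∑ z, π' z * Real.exp (R z / β) := by
    funext y; rw [hπstar, hZ]
  refine ⟨hL_var ▸ sum_mul_sq_sub_nonneg (fun y => (hπs y).le) _, ?_⟩
  rw [hL_var, sum_mul_sq_sub_eq_zero_iff hπs, forall_eq_sum_mul_iff_exists_const hπs1,
    funext hd,
    exists_const_mul_log_div_iff hπ (fun y => mul_pos (hπ' y) (Real.exp_pos _)) hβ.ne',
    eq_div_sum_iff_exists_const_mul hπ1, hπstar_eq]

theorem gvpo_loss_nonneg_and_zero_iff_gibbs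
    {Y : Type*} [Fintype Y] [Nonempty Y]
    (π' πs π : Y → ℝ)
    (hπ' : ∀ y, 0 < π' y) (hπ'1 : ∑ y, π' y = 1)
    (hπs : ∀ y, 0 < πs y) (hπs1 : ∑ y, πs y = 1)
    (hπ : ∀ y, 0 < π y) (hπ1 : ∑ y, π y = 1)
    (R : Y → ℝ) (β : ℝ) (hβ : 0 < β)
    (Z : ℝ) (hZ : Z = ∑ y, π' y * Real.exp (R y / β))
    (πstar : Y → ℝ) (hπstar : ∀ y, πstar y = π' y * Real.exp (R y / β) / Z)
    (Rπ : Y → ℝ) (hRπ : ∀ y, Rπ y = β * Real.log (π y / π' y))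
    (L : ℝ)
    (hL : L = ∑ y, πs y *
      ((Rπ y - ∑ z, πs z * Rπ z) - (R y - ∑ z, πs z * R z))^2) :
    0 ≤ L ∧ (L = 0 ↔ π = πstar) :=
  gvpo_loss_nonneg_and_zero_iff_gibbs_general π' πs π hπ' hπs hπs1 hπ hπ1 R β hβ Z hZ πstar hπstar
    Rπ hRπ L hL
end

section
/- Let Y be finite, π' and π_s full-support distributions on Y, R : Y → ℝ, β > 0. The GVPO loss L(π) = E_{y∼π_s}[((R_π(y) − E_{π_s}R_π) − (R(y) − E_{π_s}R))²] with R_π(y) = β log(π(y)/π'(y)) has the same unique minimizer π* = Gibbs(π', R, β) for every choice of full-support sampling distribution π_s. -/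
/-! With `g_π y = β log (π y / π' y) - R y`, the GVPO loss is the `π_s`-variance of `g_π`, since the
centred difference of `β log (π / π')` and `R` is the centred `g_π`. A variance is nonnegative and,
for a full-support `π_s`, vanishes exactly when `g_π` is constant. For the Gibbs policy `g_π` is the
constant `-β log Z` (`Z` the Gibbs normaliser), and a probability vector with constant `g_π` is
proportional to `π' exp (R / β)`, hence equal to the Gibbs policy. None of this depends on `π_s`. -/

open Finset

section WeightedVariance

variable {Y : Type*} [Fintype Y]

def weightedVar (w f : Y → ℝ) : ℝ :=
  ∑ y, w y * (f y - ∑ z, w z * f z) ^ 2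

theorem weightedVar_sub (w f g : Y → ℝ) :
    weightedVar w (f - g) =
      ∑ y, w y * ((f y - ∑ z, w z * f z) - (g y - ∑ z, w z * g z)) ^ 2 := by
  have hmean : ∑ z, w z * (f - g) z = ∑ z, w z * f z - ∑ z, w z * g z := by
    simp only [Pi.sub_apply, mul_sub, sum_sub_distrib]
  unfold weightedVar
  refine sum_congr rfl fun y _ => ?_
  rw [hmean, Pi.sub_apply]
  ring

theorem weightedVar_nonneg {w : Y → ℝ} (hw : ∀ y, 0 ≤ w y) (f : Y → ℝ) :
    0 ≤ weightedVar w f :=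
  sum_nonneg fun y _ => mul_nonneg (hw y) (sq_nonneg _)

theorem weightedVar_eq_zero_iff {w : Y → ℝ} (hw : ∀ y, 0 < w y) (hw1 : ∑ y, w y = 1)
    (f : Y → ℝ) : weightedVar w f = 0 ↔ ∃ c, ∀ y, f y = c := by
  constructor
  · intro h
    refine ⟨∑ z, w z * f z, fun y => ?_⟩
    have hterm := (sum_eq_zero_iff_of_nonneg fun y _ =>
      mul_nonneg (hw y).le (sq_nonneg (f y - ∑ z, w z * f z))).1 h y (mem_univ y)
    rw [mul_eq_zero, pow_eq_zero_iff two_ne_zero, sub_eq_zero] at hterm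
    exact hterm.resolve_left (hw y).ne'
  · rintro ⟨c, hc⟩
    have hmean : ∑ z, w z * f z = c := by
      simp only [hc, ← sum_mul, hw1, one_mul]
    unfold weightedVar
    rw [hmean]
    simp [hc]

end WeightedVariance

section Gibbs

variable {Y : Type*} [Fintype Y] {π' R : Y → ℝ} {β : ℝ}

theorem eq_div_sum_of_eq_mul_const {p q : Y → ℝ} {k : ℝ} (h : ∀ y, p y = q y * k)
    (hp1 : ∑ y, p y = 1) (y : Y) : p y = q y / ∑ z, q z := by
  have hk : (∑ z, q z) * k = 1 := by rw [sum_mul, ← hp1]; exact sum_congr rfl fun z _ => (h z).symm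
  rw [h y, eq_div_iff (left_ne_zero_of_mul_eq_one hk), mul_assoc, mul_comm k, hk, mul_one]

theorem logRatio_gibbs_sub (hπ' : ∀ y, 0 < π' y) (hβ : β ≠ 0) (y : Y) :
    β * Real.log (π' y * Real.exp (R y / β) / (∑ z, π' z * Real.exp (R z / β)) / π' y) - R y =
      -(β * Real.log (∑ z, π' z * Real.exp (R z / β))) := by
  have hZ : 0 < ∑ z, π' z * Real.exp (R z / β) :=
    sum_pos (fun z _ => mul_pos (hπ' z) (Real.exp_pos _)) ⟨y, mem_univ y⟩
  have hratio : π' y * Real.exp (R y / β) / (∑ z, π' z * Real.exp (R z / β)) / π' y =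
      Real.exp (R y / β) / ∑ z, π' z * Real.exp (R z / β) := by
    field_simp [(hπ' y).ne']
  rw [hratio, Real.log_div (Real.exp_ne_zero _) hZ.ne', Real.log_exp]
  field_simp
  ring

theorem eq_mul_exp_of_logRatio_sub_eq {p q r c : ℝ} (hp : 0 < p) (hq : 0 < q) (hβ : β ≠ 0)
    (h : β * Real.log (p / q) - r = c) : p = q * Real.exp (r / β) * Real.exp (c / β) := by
  have hlog : Real.log (p / q) = r / β + c / β := by
    field_simp
    linarith
  rw [mul_assoc, ← Real.exp_add, ← hlog, Real.exp_log (div_pos hp hq), mul_div_cancel₀ _ hq.ne']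

theorem eq_gibbs_of_logRatio_sub_eq_const {π : Y → ℝ} {c : ℝ} (hπ' : ∀ y, 0 < π' y)
    (hπ : ∀ y, 0 < π y) (hπ1 : ∑ y, π y = 1) (hβ : β ≠ 0)
    (hc : ∀ y, β * Real.log (π y / π' y) - R y = c) (y : Y) :
    π y = π' y * Real.exp (R y / β) / ∑ z, π' z * Real.exp (R z / β) :=
  eq_div_sum_of_eq_mul_const
    (fun y => eq_mul_exp_of_logRatio_sub_eq (hπ y) (hπ' y) hβ (hc y)) hπ1 y

end Gibbs

theorem gvpo_minimizer_independent_of_sampling_general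
    {Y : Type*} [Fintype Y]
    (π' : Y → ℝ) (hπ' : ∀ y, 0 < π' y)
    (R : Y → ℝ) (β : ℝ) (hβ : 0 < β)
    (πstar : Y → ℝ)
    (hπstar : ∀ y, πstar y = π' y * Real.exp (R y / β) /
      (∑ z, π' z * Real.exp (R z / β)))
    (L : (Y → ℝ) → (Y → ℝ) → ℝ)
    (hL : ∀ πs π, L πs π = ∑ y, πs y *
      (((β * Real.log (π y / π' y)) - ∑ z, πs z * (β * Real.log (π z / π' z)))
        - (R y - ∑ z, πs z * R z))^2) :
    ∀ πs : Y → ℝ, (∀ y, 0 < πs y) → (∑ y, πs y = 1) →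
      ∀ π : Y → ℝ, (∀ y, 0 < π y) → (∑ y, π y = 1) →
        L πs πstar ≤ L πs π ∧ (L πs π = L πs πstar ↔ π = πstar) := by
  intro πs hπs hπs1 π hπ hπ1
  have hLvar : ∀ p, L πs p = weightedVar πs (fun y => β * Real.log (p y / π' y) - R y) := fun p =>
    (hL πs p).trans (weightedVar_sub πs (fun y => β * Real.log (p y / π' y)) R).symm
  have hLstar : L πs πstar = 0 := by
    rw [hLvar, weightedVar_eq_zero_iff hπs hπs1]
    exact ⟨_, fun y => by rw [hπstar]; exact logRatio_gibbs_sub hπ' hβ.ne' y⟩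
  refine ⟨?_, fun h => ?_, ?_⟩
  · rw [hLstar, hLvar]
    exact weightedVar_nonneg (fun y => (hπs y).le) _
  · rw [hLstar, hLvar, weightedVar_eq_zero_iff hπs hπs1] at h
    obtain ⟨c, hc⟩ := h
    funext y
    rw [hπstar]
    exact eq_gibbs_of_logRatio_sub_eq_const hπ' hπ hπ1 hβ.ne' hc y
  · rintro rfl
    rfl

theorem gvpo_minimizer_independent_of_sampling
    {Y : Type*} [Fintype Y] [Nonempty Y]
    (π' : Y → ℝ) (hπ' : ∀ y, 0 < π' y) (hπ'1 : ∑ y, π' y = 1)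
    (R : Y → ℝ) (β : ℝ) (hβ : 0 < β)
    (πstar : Y → ℝ)
    (hπstar : ∀ y, πstar y = π' y * Real.exp (R y / β) /
      (∑ z, π' z * Real.exp (R z / β)))
    (L : (Y → ℝ) → (Y → ℝ) → ℝ)
    (hL : ∀ πs π, L πs π = ∑ y, πs y *
      (((β * Real.log (π y / π' y)) - ∑ z, πs z * (β * Real.log (π z / π' z)))
        - (R y - ∑ z, πs z * R z))^2) :
    ∀ πs : Y → ℝ, (∀ y, 0 < πs y) → (∑ y, πs y = 1) →
      ∀ π : Y → ℝ, (∀ y, 0 < π y) → (∑ y, π y = 1) →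
        L πs πstar ≤ L πs π ∧ (L πs π = L πs πstar ↔ π = πstar) :=
  gvpo_minimizer_independent_of_sampling_general π' hπ' R β hβ πstar hπstar L hL
end

section
/- Let Y be a finite set, and let π_s, π', π be full-support distributions on Y, R : Y → ℝ, β > 0. Define the GVPO loss L(π) = Var_{π_s}(R_π − R) where R_π(y) = β log(π(y)/π'(y)). Then L(π) = β² Var_{π_s}(log(π/π*)), where π* = Gibbs(π', R, β); i.e., the GVPO loss equals β² times the variance under π_s of the log-likelihood ratio between π and the optimal policy. -/
open Finset

theorem gvpo_loss_eq_beta_sq_var_log_ratio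
    {Y : Type*} [Fintype Y] [Nonempty Y]
    (π' πs π : Y → ℝ)
    (hπ' : ∀ y, 0 < π' y) (hπ'1 : ∑ y, π' y = 1)
    (hπs : ∀ y, 0 < πs y) (hπs1 : ∑ y, πs y = 1)
    (hπ : ∀ y, 0 < π y) (hπ1 : ∑ y, π y = 1)
    (R : Y → ℝ) (β : ℝ) (hβ : 0 < β)
    (πstar : Y → ℝ)
    (hπstar : ∀ y, πstar y = π' y * Real.exp (R y / β) /
      (∑ z, π' z * Real.exp (R z / β))) :
    ((∑ y, πs y * (β * Real.log (π y / π' y) - R y)^2)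
        - (∑ y, πs y * (β * Real.log (π y / π' y) - R y))^2)
      = β^2 * ((∑ y, πs y * (Real.log (π y / πstar y))^2)
        - (∑ y, πs y * Real.log (π y / πstar y))^2) := by
  set Z : ℝ := ∑ z, π' z * Real.exp (R z / β) with hZdef
  have hZ : 0 < Z := Finset.sum_pos
    (fun z _ => mul_pos (hπ' z) (Real.exp_pos _)) Finset.univ_nonempty
  set f : Y → ℝ := fun y => Real.log (π y / πstar y) with hf
  set c : ℝ := β * Real.log Z with hc
  have key : ∀ y, β * Real.log (π y / π' y) - R y = β * f y - c := by
    intro y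
    have h1 : πstar y = π' y * Real.exp (R y / β) / Z := hπstar y
    have hs : 0 < πstar y := h1 ▸ div_pos (mul_pos (hπ' y) (Real.exp_pos _)) hZ
    simp only [hf, h1, hc]
    rw [Real.log_div (hπ y).ne' (hπ' y).ne',
        Real.log_div (hπ y).ne' (div_pos (mul_pos (hπ' y) (Real.exp_pos _)) hZ).ne',
        Real.log_div (mul_pos (hπ' y) (Real.exp_pos _)).ne' hZ.ne',
        Real.log_mul (hπ' y).ne' (Real.exp_ne_zero _), Real.log_exp]
    field_simp
    ring
  have e1 : (∑ y, πs y * (β * Real.log (π y / π' y) - R y)^2)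
      = ∑ y, πs y * (β * f y - c)^2 := by
    apply Finset.sum_congr rfl; intro y _; rw [key y]
  have e2 : (∑ y, πs y * (β * Real.log (π y / π' y) - R y))
      = ∑ y, πs y * (β * f y - c) := by
    apply Finset.sum_congr rfl; intro y _; rw [key y]
  rw [e1, e2]
  have h1 : (∑ y, πs y * (β * f y - c)^2)
      = β^2 * (∑ y, πs y * f y ^ 2) - (2*β*c) * (∑ y, πs y * f y) + c^2 := by
    have : (∑ y, πs y * (β * f y - c)^2)
        = ∑ y, (β^2 * (πs y * f y ^ 2) - (2*β*c) * (πs y * f y) + c^2 * πs y) := by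
      apply Finset.sum_congr rfl; intro y _; ring
    rw [this, Finset.sum_add_distrib, Finset.sum_sub_distrib,
        ← Finset.mul_sum, ← Finset.mul_sum, ← Finset.mul_sum, hπs1, mul_one]
  have h2 : (∑ y, πs y * (β * f y - c))
      = β * (∑ y, πs y * f y) - c := by
    have : (∑ y, πs y * (β * f y - c))
        = ∑ y, (β * (πs y * f y) - c * πs y) := by
      apply Finset.sum_congr rfl; intro y _; ring
    rw [this, Finset.sum_sub_distrib, ← Finset.mul_sum, ← Finset.mul_sum, hπs1, mul_one]
  rw [h1, h2]
  ring
end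

section
/- Let Y be a finite set, π' a full-support distribution, R : Y → ℝ, β > 0. The function β ↦ β log(Σ_y π'(y) exp(R(y)/β)) is nonincreasing in β on (0, ∞), with limit max_y R(y) as β → 0⁺ and limit E_{π'}[R] as β → ∞. -/
open Finset Filter

noncomputable def softMax {ι : Type*} [Fintype ι] (w R : ι → ℝ) (β : ℝ) : ℝ :=
  β * Real.log (∑ i, w i * Real.exp (R i / β))

namespace softMax

open Real

variable {ι : Type*} [Fintype ι] {w : ι → ℝ} (R : ι → ℝ)

lemma sum_mul_exp_pos (hw : ∀ i, 0 ≤ w i) (hw1 : ∑ i, w i = 1) (β : ℝ) :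
    0 < ∑ i, w i * exp (R i / β) := by
  obtain ⟨i, -, hi⟩ : ∃ i ∈ univ, (0 : ℝ) < w i :=
    exists_lt_of_sum_lt (by simp [hw1])
  exact Finset.sum_pos' (fun j _ => mul_nonneg (hw j) (exp_pos _).le)
    ⟨i, mem_univ i, mul_pos hi (exp_pos _)⟩

/-- Jensen's inequality for the concave map `x ↦ x ^ (a / b)`. -/
lemma sum_mul_exp_div_le_rpow (hw : ∀ i, 0 ≤ w i) (hw1 : ∑ i, w i = 1) {a b : ℝ}
    (ha : 0 < a) (hab : a ≤ b) :
    ∑ i, w i * exp (R i / b) ≤ (∑ i, w i * exp (R i / a)) ^ (a / b) := by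
  have hb := ha.trans_le hab
  have hexp : ∀ i, exp (R i / a) ^ (a / b) = exp (R i / b) := fun i => by
    rw [← exp_mul]; congr 1; field_simp
  simpa [hexp] using (concaveOn_rpow (div_pos ha hb).le ((div_le_one hb).2 hab)).le_map_sum
    (t := univ) (w := w) (p := fun i => exp (R i / a))
    (fun i _ => hw i) hw1 (fun i _ => Set.mem_Ici.2 (exp_pos _).le)

theorem antitoneOn (hw : ∀ i, 0 ≤ w i) (hw1 : ∑ i, w i = 1) :
    AntitoneOn (softMax w R) (Set.Ioi 0) := by
  intro a (ha : 0 < a) b (hb : 0 < b) hab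
  have hlog : log (∑ i, w i * exp (R i / b)) ≤ a / b * log (∑ i, w i * exp (R i / a)) := by
    rw [← log_rpow (sum_mul_exp_pos R hw hw1 a)]
    exact log_le_log (sum_mul_exp_pos R hw hw1 b) (sum_mul_exp_div_le_rpow R hw hw1 ha hab)
  calc softMax w R b ≤ b * (a / b * log (∑ i, w i * exp (R i / a))) :=
        mul_le_mul_of_nonneg_left hlog hb.le
    _ = softMax w R a := by unfold softMax; field_simp

lemma add_mul_log_le (hw : ∀ i, 0 ≤ w i) {i : ι} (hi : 0 < w i) {β : ℝ} (hβ : 0 < β) :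
    R i + β * log (w i) ≤ softMax w R β := by
  have hterm : w i * exp (R i / β) ≤ ∑ j, w j * exp (R j / β) :=
    single_le_sum (f := fun j => w j * exp (R j / β))
      (fun j _ => mul_nonneg (hw j) (exp_pos _).le) (mem_univ i)
  have hlog := log_le_log (mul_pos hi (exp_pos _)) hterm
  rw [log_mul hi.ne' (exp_pos _).ne', log_exp] at hlog
  calc R i + β * log (w i) = β * (log (w i) + R i / β) := by field_simp; ring
    _ ≤ softMax w R β := mul_le_mul_of_nonneg_left hlog hβ.le

lemma le_sup' [Nonempty ι] (hw : ∀ i, 0 ≤ w i) (hw1 : ∑ i, w i = 1) {β : ℝ} (hβ : 0 < β) :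
    softMax w R β ≤ univ.sup' univ_nonempty R := by
  set M := univ.sup' univ_nonempty R
  have hsum : ∑ i, w i * exp (R i / β) ≤ exp (M / β) := calc
    ∑ i, w i * exp (R i / β) ≤ ∑ i, w i * exp (M / β) := by
        gcongr with i
        · exact hw i
        · exact Finset.le_sup' R (mem_univ i)
    _ = exp (M / β) := by rw [← sum_mul, hw1, one_mul]
  have hlog := log_le_log (sum_mul_exp_pos R hw hw1 β) hsum
  rw [log_exp] at hlog
  calc softMax w R β ≤ β * (M / β) := mul_le_mul_of_nonneg_left hlog hβ.le
    _ = M := by field_simp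

/-- Squeeze between `R i₀ + β log w i₀` and `R i₀`, where `i₀` attains the maximum. -/
theorem tendsto_nhdsGT_zero [Nonempty ι] (hw : ∀ i, 0 < w i) (hw1 : ∑ i, w i = 1) :
    Tendsto (softMax w R) (nhdsWithin 0 (Set.Ioi 0)) (nhds (univ.sup' univ_nonempty R)) := by
  obtain ⟨i₀, -, hi₀⟩ := exists_mem_eq_sup' univ_nonempty R
  have hw0 : ∀ i, 0 ≤ w i := fun i => (hw i).le
  have hlower : Tendsto (fun β => R i₀ + β * log (w i₀)) (nhdsWithin 0 (Set.Ioi 0)) (nhds (R i₀)) :=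
    tendsto_nhdsWithin_of_tendsto_nhds <|
      (by fun_prop : Continuous fun β => R i₀ + β * log (w i₀)).tendsto' 0 _ (by simp)
  rw [hi₀]
  refine tendsto_of_tendsto_of_tendsto_of_le_of_le' hlower tendsto_const_nhds ?_ ?_
  · exact eventually_nhdsWithin_of_forall fun β hβ => add_mul_log_le R hw0 (hw i₀) hβ
  · exact eventually_nhdsWithin_of_forall fun β hβ => hi₀ ▸ le_sup' R hw0 hw1 hβ

lemma hasDerivAt_log_sum_mul_exp_mul (hw1 : ∑ i, w i = 1) :
    HasDerivAt (fun t => log (∑ i, w i * exp (R i * t))) (∑ i, w i * R i) 0 := by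
  have hsum : HasDerivAt (fun t => ∑ i, w i * exp (R i * t)) (∑ i, w i * R i) 0 := by
    refine HasDerivAt.fun_sum fun i _ => ?_
    simpa using (((hasDerivAt_id (0 : ℝ)).const_mul (R i)).exp).const_mul (w i)
  simpa [hw1] using hsum.log (by simp [hw1])

/-- `softMax w R β = β * g β⁻¹` is a difference quotient of `g t = log ∑ i, w i * exp (R i * t)`
at `0`, and `g' 0 = ∑ i, w i * R i`. -/
theorem tendsto_atTop (hw1 : ∑ i, w i = 1) :
    Tendsto (softMax w R) atTop (nhds (∑ i, w i * R i)) := by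
  have hslope := hasDerivAt_iff_tendsto_slope.1 (hasDerivAt_log_sum_mul_exp_mul R hw1)
  refine (hslope.comp (tendsto_inv_atTop_nhdsGT_zero.mono_right
    (nhdsWithin_mono 0 fun x hx => ne_of_gt hx))).congr fun β => ?_
  simp [slope_def_field, hw1, softMax, div_eq_mul_inv, mul_comm]

end softMax

theorem soft_max_monotone_and_limits
    {Y : Type*} [Fintype Y] [Nonempty Y]
    (π' : Y → ℝ) (hπ' : ∀ y, 0 < π' y) (hπ'1 : ∑ y, π' y = 1)
    (R : Y → ℝ) :
    AntitoneOn (fun β : ℝ => β * Real.log (∑ y, π' y * Real.exp (R y / β)))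
        (Set.Ioi 0) ∧
      Tendsto (fun β : ℝ => β * Real.log (∑ y, π' y * Real.exp (R y / β)))
        (nhdsWithin 0 (Set.Ioi 0))
        (nhds (Finset.univ.sup' Finset.univ_nonempty R)) ∧
      Tendsto (fun β : ℝ => β * Real.log (∑ y, π' y * Real.exp (R y / β)))
        atTop (nhds (∑ y, π' y * R y)) :=
  ⟨softMax.antitoneOn R (fun y => (hπ' y).le) hπ'1, softMax.tendsto_nhdsGT_zero R hπ' hπ'1,
    softMax.tendsto_atTop R hπ'1⟩
end

section
/- Let Y be finite, π', π_s full-support distributions on Y, R : Y → ℝ, β > 0, and π* = Gibbs(π', R, β). For any full-support distribution π, the GVPO loss satisfies the lower bound L(π) = Var_{π_s}(β log(π/π') − R) ≥ β² · min_y π_s(y) · Σ_y π_s(y)(log(π(y)/π*(y)) − E_{π_s}[log(π/π*)])², and L(π) = 0 iff π = π*. -/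
open Finset

theorem gvpo_loss_lower_bound_and_zero_iff
    {Y : Type*} [Fintype Y] [Nonempty Y]
    (π' πs π : Y → ℝ)
    (hπ' : ∀ y, 0 < π' y) (hπ'1 : ∑ y, π' y = 1)
    (hπs : ∀ y, 0 < πs y) (hπs1 : ∑ y, πs y = 1)
    (hπ : ∀ y, 0 < π y) (hπ1 : ∑ y, π y = 1)
    (R : Y → ℝ) (β : ℝ) (hβ : 0 < β)
    (πstar : Y → ℝ)
    (hπstar : ∀ y, πstar y = π' y * Real.exp (R y / β) /
      (∑ z, π' z * Real.exp (R z / β)))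
    (L : ℝ)
    (hL : L = ∑ y, πs y *
      ((β * Real.log (π y / π' y) - R y)
        - ∑ z, πs z * (β * Real.log (π z / π' z) - R z))^2) :
    (β^2 * (Finset.univ.inf' Finset.univ_nonempty πs) *
        ∑ y, πs y * (Real.log (π y / πstar y)
          - ∑ z, πs z * Real.log (π z / πstar z))^2) ≤ L ∧
      (L = 0 ↔ π = πstar) := by
  have hZ : 0 < ∑ z, π' z * Real.exp (R z / β) :=
    Finset.sum_pos (fun z _ => mul_pos (hπ' z) (Real.exp_pos _)) Finset.univ_nonempty
  set Z := ∑ z, π' z * Real.exp (R z / β) with hZdef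
  have hstarpos : ∀ y, 0 < πstar y := fun y => by
    rw [hπstar]; exact div_pos (mul_pos (hπ' y) (Real.exp_pos _)) hZ
  have hstar1 : ∑ y, πstar y = 1 := by
    simp only [hπstar]
    rw [← Finset.sum_div, ← hZdef, div_self hZ.ne']
  set f : Y → ℝ := fun y => Real.log (π y / πstar y) with hf
  have key : ∀ y, β * Real.log (π y / π' y) - R y = β * f y - β * Real.log Z := by
    intro y
    have h1 : f y = Real.log (π y) - Real.log (πstar y) :=
      Real.log_div (hπ y).ne' (hstarpos y).ne'
    have h2 : Real.log (πstar y) = Real.log (π' y) + R y / β - Real.log Z := by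
      rw [hπstar y, Real.log_div (mul_pos (hπ' y) (Real.exp_pos _)).ne' hZ.ne',
        Real.log_mul (hπ' y).ne' (Real.exp_pos _).ne', Real.log_exp]
    rw [Real.log_div (hπ y).ne' (hπ' y).ne', h1, h2]
    field_simp
    ring
  set μ := ∑ z, πs z * f z with hμ
  have hsum : ∑ z, πs z * (β * Real.log (π z / π' z) - R z) = β * μ - β * Real.log Z := by
    simp only [key]
    calc ∑ z, πs z * (β * f z - β * Real.log Z)
        = ∑ z, (β * (πs z * f z) - β * Real.log Z * πs z) :=
          Finset.sum_congr rfl (fun z _ => by ring)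
      _ = β * (∑ z, πs z * f z) - β * Real.log Z * (∑ z, πs z) := by
          rw [Finset.sum_sub_distrib, ← Finset.mul_sum, ← Finset.mul_sum]
      _ = β * μ - β * Real.log Z := by rw [hπs1, ← hμ]; ring
  set S := ∑ y, πs y * (f y - μ)^2 with hS
  have hLS : L = β^2 * S := by
    rw [hL, hS, Finset.mul_sum]
    refine Finset.sum_congr rfl (fun y _ => ?_)
    rw [key, hsum]
    ring
  have hSnonneg : 0 ≤ S :=
    Finset.sum_nonneg (fun y _ => mul_nonneg (hπs y).le (sq_nonneg _))
  have hb2 : (0:ℝ) < β^2 := pow_pos hβ 2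
  constructor
  · -- lower bound
    have y0 : Y := Classical.arbitrary Y
    have hm1 : Finset.univ.inf' Finset.univ_nonempty πs ≤ 1 := by
      have h1 : Finset.univ.inf' Finset.univ_nonempty πs ≤ πs y0 :=
        Finset.inf'_le _ (Finset.mem_univ y0)
      have h2 : πs y0 ≤ 1 := by
        rw [← hπs1]
        exact Finset.single_le_sum (fun z _ => (hπs z).le) (Finset.mem_univ y0)
      linarith
    have : β^2 * (Finset.univ.inf' Finset.univ_nonempty πs) * S ≤ β^2 * 1 * S := by
      apply mul_le_mul_of_nonneg_right _ hSnonneg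
      exact mul_le_mul_of_nonneg_left hm1 hb2.le
    calc β^2 * (Finset.univ.inf' Finset.univ_nonempty πs) *
          ∑ y, πs y * (Real.log (π y / πstar y)
            - ∑ z, πs z * Real.log (π z / πstar z))^2
        = β^2 * (Finset.univ.inf' Finset.univ_nonempty πs) * S := rfl
      _ ≤ β^2 * 1 * S := this
      _ = L := by rw [hLS]; ring
  · constructor
    · intro hL0
      have hS0 : S = 0 := by
        have := hLS ▸ hL0
        exact (mul_eq_zero.mp this).resolve_left hb2.ne'
      have hall : ∀ y, f y = μ := by
        intro y
        have h := (Finset.sum_eq_zero_iff_of_nonneg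
          (fun y _ => mul_nonneg (hπs y).le (sq_nonneg _))).mp hS0 y (Finset.mem_univ y)
        have h2 : (f y - μ)^2 = 0 := by
          rcases mul_eq_zero.mp h with h' | h'
          · exact absurd h' (hπs y).ne'
          · exact h'
        have := pow_eq_zero_iff (n := 2) (by norm_num) |>.mp h2
        linarith
      have hexp : ∀ y, π y = Real.exp μ * πstar y := by
        intro y
        have : Real.exp (f y) = π y / πstar y :=
          by rw [hf]; exact Real.exp_log (div_pos (hπ y) (hstarpos y))
        rw [hall y, eq_div_iff (hstarpos y).ne'] at this
        linarith [this]
      have hμ0 : Real.exp μ = 1 := by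
        have h : ∑ y, π y = Real.exp μ * ∑ y, πstar y := by
          rw [Finset.mul_sum]
          exact Finset.sum_congr rfl (fun y _ => hexp y)
        rw [hπ1, hstar1, mul_one] at h
        linarith
      funext y
      rw [hexp y, hμ0, one_mul]
    · intro hpe
      have hf0 : ∀ y, f y = 0 := fun y => by
        rw [hf]; simp only [hpe, div_self (hstarpos y).ne', Real.log_one]
      have hμ0 : μ = 0 := by
        rw [hμ]; exact Finset.sum_eq_zero (fun z _ => by rw [hf0 z, mul_zero])
      have : S = 0 := by
        rw [hS]
        exact Finset.sum_eq_zero (fun y _ => by rw [hf0 y, hμ0]; ring)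
      rw [hLS, this, mul_zero]
end
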